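/- For all natural numbers i, i' and all real x, Φ_{ii'}(x) = (−1)^{i+i'} Φ_{i'i}(x). -/
import Mathlib


open Real MeasureTheory

/-- The degree-`k` Legendre polynomial via the Rodrigues formula
`P_k(t) = (1/(2^k k!)) (d/dt)^k (t² - 1)^k`. -/
noncomputable def legendreP (k : ℕ) (t : ℝ) : ℝ :=
  (1 / ((2 : ℝ) ^ k * (Nat.factorial k : ℝ))) *
    (Polynomial.derivative^[k] (((Polynomial.X : Polynomial ℝ) ^ 2 - 1) ^ k)).eval t

/-- The scaling functions `φ_k(x) = √(2k+1) P_k(2x-1)` on `[0,1]`, extended by zero. -/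
noncomputable def scalingFn (k : ℕ) (x : ℝ) : ℝ :=
  if x ∈ Set.Icc (0:ℝ) 1 then Real.sqrt (2 * (k : ℝ) + 1) * legendreP k (2 * x - 1) else 0

/-- The cross-correlation functions `Φ_{ii'}(x) = ∫ φ_i(x+y) φ_{i'}(y) dy`. -/
noncomputable def crossCorr (i i' : ℕ) (x : ℝ) : ℝ :=
  ∫ y : ℝ, scalingFn i (x + y) * scalingFn i' y

lemma iter_derivative_comp_neg (n : ℕ) (p : Polynomial ℝ) :
    Polynomial.derivative^[n] (p.comp (-Polynomial.X)) =
      (-1 : Polynomial ℝ) ^ n * (Polynomial.derivative^[n] p).comp (-Polynomial.X) := by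
  induction n with
  | zero => simp
  | succ n ih =>
    rw [Function.iterate_succ_apply', ih, Function.iterate_succ_apply']
    rw [Polynomial.derivative_mul, Polynomial.derivative_comp]
    have hd : Polynomial.derivative ((-1 : Polynomial ℝ) ^ n) = 0 := by
      simp [Polynomial.derivative_pow]
    rw [hd]
    simp only [Polynomial.derivative_neg, Polynomial.derivative_X, zero_mul, zero_add, pow_succ]
    ring

lemma legendreP_neg (k : ℕ) (t : ℝ) :
    legendreP k (-t) = (-1 : ℝ) ^ k * legendreP k t := by
  have hcomp : (((Polynomial.X : Polynomial ℝ) ^ 2 - 1) ^ k).comp (-Polynomial.X) =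
      ((Polynomial.X : Polynomial ℝ) ^ 2 - 1) ^ k := by
    simp [Polynomial.pow_comp, Polynomial.sub_comp, Polynomial.pow_comp, neg_pow]
  have h := iter_derivative_comp_neg k (((Polynomial.X : Polynomial ℝ) ^ 2 - 1) ^ k)
  rw [hcomp] at h
  have := congrArg (Polynomial.eval t) h
  simp only [Polynomial.eval_mul, Polynomial.eval_pow, Polynomial.eval_neg,
    Polynomial.eval_one, Polynomial.eval_comp, Polynomial.eval_X] at this
  have h2 : ((Polynomial.derivative^[k] (((Polynomial.X : Polynomial ℝ) ^ 2 - 1) ^ k))).eval (-t)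
      = (-1 : ℝ) ^ k *
        ((Polynomial.derivative^[k] (((Polynomial.X : Polynomial ℝ) ^ 2 - 1) ^ k))).eval t := by
    conv_rhs => rw [this]
    rw [← mul_assoc, ← pow_add, ← two_mul, pow_mul, neg_one_sq, one_pow, one_mul]
  unfold legendreP
  rw [h2]; ring

lemma scalingFn_one_sub (k : ℕ) (x : ℝ) :
    scalingFn k (1 - x) = (-1 : ℝ) ^ k * scalingFn k x := by
  unfold scalingFn
  by_cases hx : x ∈ Set.Icc (0:ℝ) 1
  · have hx' : 1 - x ∈ Set.Icc (0:ℝ) 1 := by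
      constructor <;> [linarith [hx.2]; linarith [hx.1]]
    rw [if_pos hx', if_pos hx]
    have : 2 * (1 - x) - 1 = -(2 * x - 1) := by ring
    rw [this, legendreP_neg]; ring
  · have hx' : 1 - x ∉ Set.Icc (0:ℝ) 1 := by
      intro h; exact hx ⟨by linarith [h.2], by linarith [h.1]⟩
    rw [if_neg hx', if_neg hx]; ring

/-- Transposition of indices: `Φ_{ii'}(x) = (-1)^{i+i'} Φ_{i'i}(x)`. -/
theorem crossCorr_transpose (i i' : ℕ) (x : ℝ) :
    crossCorr i i' x = (-1 : ℝ) ^ (i + i') * crossCorr i' i x := by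
  unfold crossCorr
  rw [← MeasureTheory.integral_sub_left_eq_self
    (fun y => scalingFn i (x + y) * scalingFn i' y) volume (1 - x)]
  rw [← MeasureTheory.integral_const_mul]
  congr 1
  ext y
  have h1 : x + (1 - x - y) = 1 - y := by ring
  have h2 : 1 - x - y = 1 - (x + y) := by ring
  rw [h1, h2, scalingFn_one_sub i, scalingFn_one_sub i', pow_add]
  ring
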